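/- Let T be a symmetric 4-tensor of dimension d and define λ_maxabs(T) = max_{‖v‖=1} |Σ_{i,j,k,ℓ} T_{ijkℓ} v_i v_j v_k v_ℓ|. Then for all indices s, t ∈ {1,…,d}, λ_maxabs(T) ≥ (12/73) · |T_{ssst}|. -/

import Mathlib

/-!
On the plane spanned by `e_s` and `e_t` the quartic form of `T` is the binary quartic
`p(x, y) = a x⁴ + 4 b x³ y + 6 c x² y² + 4 e x y³ + f y⁴` with `b = T_ssst`, and its odd part is
`p(x, y) - p(x, -y) = 8 b x³ y + 8 e x y³`. At the unit vectors `(4, 3) / 5` and `(3, 4) / 5` the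
monomials `x³ y` and `x y³` take the values `192/625, 108/625` and `108/625, 192/625`, so
`16 (p(4/5, 3/5) - p(4/5, -3/5)) - 9 (p(3/5, 4/5) - p(3/5, -4/5)) = (672/25) b`.
Each of the four values is at most `λ_maxabs` in absolute value, whence
`|T_ssst| ≤ (625/336) λ_maxabs`. For `s = t` one evaluates at `e_s` instead.
-/

theorem Matrix.comp_vecCons {α β : Type*} (f : α → β) (a : α) {n : ℕ} (v : Fin n → α) :
    f ∘ vecCons a v = vecCons (f a) (f ∘ v) := Fin.comp_cons f a v

theorem Matrix.comp_vecEmpty {α β : Type*} (f : α → β) : f ∘ ![] = ![] := Matrix.empty_eq _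

theorem Fintype.sum_fin_succ_pi {β M : Type*} [Fintype β] [AddCommMonoid M] {n : ℕ}
    (F : (Fin (n + 1) → β) → M) : ∑ w, F w = ∑ b, ∑ w : Fin n → β, F (Matrix.vecCons b w) := by
  rw [← (Fin.consEquiv fun _ => β).sum_comp F, Fintype.sum_prod_type]; rfl

theorem Fintype.sum_fin_zero_pi {β M : Type*} [Fintype β] [AddCommMonoid M]
    (F : (Fin 0 → β) → M) : ∑ w, F w = F ![] := by
  rw [Fintype.sum_unique]; exact congrArg F (Subsingleton.elim _ _)

section

variable {ι : Type*}

def IsSymmetricTensor {R : Type*} {n : ℕ} (T : (Fin n → ι) → R) : Prop :=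
  ∀ (p : Equiv.Perm (Fin n)) (f : Fin n → ι), T (f ∘ p) = T f

theorem IsSymmetricTensor.apply_ssst {R : Type*} {T : (Fin 4 → ι) → R} (hT : IsSymmetricTensor T)
    (s t : ι) :
    T ![s, s, t, s] = T ![s, s, s, t] ∧ T ![s, t, s, s] = T ![s, s, s, t] ∧
      T ![t, s, s, s] = T ![s, s, s, t] := by
  refine ⟨?_, ?_, ?_⟩
  · convert hT (Equiv.swap 2 3) ![s, s, s, t] using 2
    ext j; fin_cases j <;> rfl
  · convert hT (Equiv.swap 1 3) ![s, s, s, t] using 2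
    ext j; fin_cases j <;> rfl
  · convert hT (Equiv.swap 0 3) ![s, s, s, t] using 2
    ext j; fin_cases j <;> rfl

variable [Fintype ι] [DecidableEq ι]

section

variable {R : Type*} [CommSemiring R] {n : ℕ}

def tensorForm (T : (Fin n → ι) → R) (v : ι → R) : R :=
  ∑ f : Fin n → ι, T f * ∏ j, v (f j)

theorem tensorForm_sum_single {β : Type*} [Fintype β] (T : (Fin n → ι) → R)
    (g : β → ι) (c : β → R) :
    tensorForm T (∑ b, Pi.single (g b) (c b)) = ∑ w : Fin n → β, T (g ∘ w) * ∏ j, c (w j) := by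
  simp only [tensorForm, Finset.sum_apply, Pi.single_apply, Fintype.prod_sum, Finset.mul_sum]
  rw [Finset.sum_comm]
  refine Finset.sum_congr rfl fun w _ => ?_
  have hsupp (f : Fin n → ι) : (∀ j ∈ Finset.univ, f j = g (w j)) ↔ f = g ∘ w := by
    simp [funext_iff]
  simp only [Finset.prod_ite_zero, hsupp, mul_ite, mul_zero, Fintype.sum_ite_eq']

theorem tensorForm_single (T : (Fin n → ι) → R) (s : ι) (x : R) :
    tensorForm T (Pi.single s x) = T (fun _ => s) * x ^ n := by
  simpa [Function.comp_def] using tensorForm_sum_single T (fun _ : Unit => s) (fun _ => x)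

theorem tensorForm_single_add_single (T : (Fin n → ι) → R) (s t : ι) (x y : R) :
    tensorForm T (Pi.single s x + Pi.single t y) =
      ∑ w : Fin n → Fin 2, T (![s, t] ∘ w) * ∏ j, ![x, y] (w j) := by
  simpa using tensorForm_sum_single T ![s, t] ![x, y]

theorem sum_sq_single_add_single {s t : ι} (hst : s ≠ t) (x y : R) :
    ∑ i, (Pi.single s x + Pi.single t y : ι → R) i ^ 2 = x ^ 2 + y ^ 2 := by
  have hsq (i : ι) : (Pi.single s x + Pi.single t y : ι → R) i ^ 2 =
      (Pi.single s (x ^ 2) : ι → R) i + (Pi.single t (y ^ 2) : ι → R) i := by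
    by_cases his : i = s
    · subst his; simp [hst]
    · by_cases hit : i = t
      · subst hit; simp [his]
      · simp [his, hit]
  simp only [hsq, Finset.sum_add_distrib, Finset.sum_pi_single', Finset.mem_univ, if_true]

end

theorem IsSymmetricTensor.tensorForm_sub_tensorForm_neg {R : Type*} [CommRing R]
    {T : (Fin 4 → ι) → R} (hT : IsSymmetricTensor T) (s t : ι) (x y : R) :
    tensorForm T (Pi.single s x + Pi.single t y) -
        tensorForm T (Pi.single s x + Pi.single t (-y)) =
      8 * T ![s, s, s, t] * x ^ 3 * y +
        2 * (T ![s, t, t, t] + T ![t, s, t, t] + T ![t, t, s, t] + T ![t, t, t, s]) * x * y ^ 3 := by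
  obtain ⟨h₁, h₂, h₃⟩ := hT.apply_ssst s t
  simp only [tensorForm_single_add_single, Fintype.sum_fin_succ_pi, Fintype.sum_fin_zero_pi,
    Fin.sum_univ_two, Fin.prod_univ_four, Matrix.comp_vecCons, Matrix.comp_vecEmpty,
    Matrix.cons_val_zero, Matrix.cons_val_one, Matrix.cons_val_two, Matrix.cons_val_three,
    Matrix.head_cons, Matrix.tail_cons, h₁, h₂, h₃]
  ring

theorem IsSymmetricTensor.abs_apply_ssst_le {T : (Fin 4 → ι) → ℝ} (hT : IsSymmetricTensor T)
    {s t : ι} (hst : s ≠ t) {c : ℝ}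
    (hc : ∀ v : ι → ℝ, ∑ i, v i ^ 2 = 1 → |tensorForm T v| ≤ c) :
    |T ![s, s, s, t]| ≤ 625 / 336 * c := by
  set q : ℝ → ℝ → ℝ := fun x y => tensorForm T (Pi.single s x + Pi.single t y) with hq_def
  have hq (x y : ℝ) (hxy : x ^ 2 + y ^ 2 = 1) : |q x y| ≤ c :=
    hc _ ((sum_sq_single_add_single hst x y).trans hxy)
  have hcomb : 16 * (q (4 / 5) (3 / 5) - q (4 / 5) (-(3 / 5))) -
      9 * (q (3 / 5) (4 / 5) - q (3 / 5) (-(4 / 5))) = 672 / 25 * T ![s, s, s, t] := by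
    simp only [hq_def, hT.tensorForm_sub_tensorForm_neg]
    ring
  have h₁ := hq (4 / 5) (3 / 5) (by norm_num)
  have h₂ := hq (4 / 5) (-(3 / 5)) (by norm_num)
  have h₃ := hq (3 / 5) (4 / 5) (by norm_num)
  have h₄ := hq (3 / 5) (-(4 / 5)) (by norm_num)
  rw [abs_le] at h₁ h₂ h₃ h₄ ⊢
  constructor <;> linarith

theorem abs_apply_const_le_of_forall_abs_tensorForm_le {n : ℕ} {T : (Fin n → ι) → ℝ} {c : ℝ}
    (hc : ∀ v : ι → ℝ, ∑ i, v i ^ 2 = 1 → |tensorForm T v| ≤ c) (s : ι) :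
    |T (fun _ => s)| ≤ c := by
  simpa [tensorForm_single] using hc (Pi.single s 1) (by simp [sq, Pi.single_apply])

end

/-- For a symmetric 4-tensor T with λ_maxabs(T) = max_{‖v‖=1} |Σ T_{ijkℓ} v_i v_j v_k v_ℓ|,
for all indices s, t one has λ_maxabs(T) ≥ (12/73) ⋅ |T_{ssst}|. -/
theorem symm4_lambda_maxabs_ge_ssst_entry
    (d : ℕ) (T : (Fin 4 → Fin d) → ℝ)
    (hsym : ∀ (p : Equiv.Perm (Fin 4)) (f : Fin 4 → Fin d), T (f ∘ p) = T f)
    (lamMaxAbs : ℝ)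
    (hmax : IsGreatest {x : ℝ | ∃ v : Fin d → ℝ, (∑ i, v i ^ 2 = 1)
        ∧ x = |∑ f : Fin 4 → Fin d, T f * ∏ j, v (f j)|} lamMaxAbs)
    (s t : Fin d) :
    (12 / 73 : ℝ) * |T ![s, s, s, t]| ≤ lamMaxAbs := by
  have hbound (v : Fin d → ℝ) (hv : ∑ i, v i ^ 2 = 1) : |tensorForm T v| ≤ lamMaxAbs :=
    hmax.2 ⟨v, hv, rfl⟩
  have hentry := abs_nonneg (T ![s, s, s, t])
  rcases eq_or_ne s t with rfl | hst
  · have hconst : (![s, s, s, s] : Fin 4 → Fin d) = fun _ => s := by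
      ext j; fin_cases j <;> rfl
    have := abs_apply_const_le_of_forall_abs_tensorForm_le hbound s
    rw [← hconst] at this
    linarith
  · have := IsSymmetricTensor.abs_apply_ssst_le hsym hst hbound
    linarith
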